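/- If n is a positive integer with n not ≡ 0 mod 4, then the natural map i_*: H_*^{Z/2}(Z/n;Z) → H_*(Z/n;Z)^{Z/2} is an isomorphism, where Z/2 acts on Z/n by x ↦ -x. -/

import Mathlib

namespace IGC

noncomputable section
set_option linter.unusedSectionVars false

/-- The group of `n`-chains of the bar complex of `G` with coefficients in `A`
(trivial `G`-action): the free `A`-module on `n`-tuples of elements of `G`. -/
abbrev C (G : Type*) [Group G] (A : Type*) [AddCommGroup A] (n : ℕ) : Type _ :=
  (Fin n → G) →₀ A

/-- The `i`-th face of a bar symbol `[g_1|⋯|g_{n+1}]`. -/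
def barFace {G : Type*} [Group G] {n : ℕ} (i : Fin (n + 2)) (g : Fin (n + 1) → G) :
    Fin n → G := fun j =>
  if (j : ℕ) + 1 < (i : ℕ) then g j.castSucc
  else if (j : ℕ) + 1 = (i : ℕ) then g j.castSucc * g j.succ
  else g j.succ

/-- The boundary map of the bar complex. -/
def barD (G : Type*) [Group G] (A : Type*) [AddCommGroup A] (n : ℕ) :
    C G A (n + 1) →+ C G A n :=
  Finsupp.liftAddHom fun g =>
    { toFun := fun a => ∑ i : Fin (n + 2), Finsupp.single (barFace i g) (((-1 : ℤ) ^ (i : ℕ)) • a)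
      map_zero' := by simp
      map_add' := fun a b => by
        simp [smul_add, Finsupp.single_add, Finset.sum_add_distrib] }

lemma barD_single {G : Type*} [Group G] {A : Type*} [AddCommGroup A] (n : ℕ)
    (g : Fin (n + 1) → G) (a : A) :
    barD G A n (Finsupp.single g a) =
      ∑ i : Fin (n + 2), Finsupp.single (barFace i g) (((-1 : ℤ) ^ (i : ℕ)) • a) := by
  rw [barD, Finsupp.liftAddHom_apply_single]; rfl

/-- The boundary map out of degree `n` (the zero map for `n = 0`). -/
def barDFrom (G : Type*) [Group G] (A : Type*) [AddCommGroup A] :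
    (n : ℕ) → C G A n →+ C G A (n - 1)
  | 0 => 0
  | n + 1 => barD G A n

/-- The chain map on bar complexes induced by a group homomorphism. -/
def chainMapOf (G : Type*) [Group G] (A : Type*) [AddCommGroup A] {H : Type*} [Group H]
    (φ : H →* G) (n : ℕ) : C H A n →+ C G A n :=
  Finsupp.mapDomain.addMonoidHom fun g j => φ (g j)

lemma chainMapOf_single (G : Type*) [Group G] (A : Type*) [AddCommGroup A] {H : Type*} [Group H]
    (φ : H →* G) (n : ℕ) (g : Fin n → H) (a : A) :
    chainMapOf G A φ n (Finsupp.single g a) = Finsupp.single (fun j => φ (g j)) a := by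
  rw [chainMapOf, Finsupp.mapDomain.addMonoidHom_apply, Finsupp.mapDomain_single]

lemma barFace_comp {G : Type*} [Group G] {H : Type*} [Group H] (φ : H →* G) {n : ℕ}
    (i : Fin (n + 2)) (g : Fin (n + 1) → H) :
    (barFace i fun j => φ (g j)) = fun j => φ (barFace i g j) := by
  funext j
  unfold barFace
  split_ifs <;> simp

lemma chainMapOf_barD (G : Type*) [Group G] (A : Type*) [AddCommGroup A] {H : Type*} [Group H]
    (φ : H →* G) (n : ℕ) :
    (barD G A n).comp (chainMapOf G A φ (n + 1)) = (chainMapOf G A φ n).comp (barD H A n) := by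
  apply Finsupp.addHom_ext
  intro g a
  rw [AddMonoidHom.comp_apply, AddMonoidHom.comp_apply, chainMapOf_single, barD_single,
    barD_single, map_sum]
  refine Finset.sum_congr rfl fun i _ => ?_
  rw [chainMapOf_single, barFace_comp]

lemma chainMapOf_comp (G : Type*) [Group G] (A : Type*) [AddCommGroup A]
    {H K : Type*} [Group H] [Group K] (ψ : H →* G) (φ : K →* H) (n : ℕ) :
    (chainMapOf G A ψ n).comp (chainMapOf H A φ n) = chainMapOf G A (ψ.comp φ) n := by
  apply Finsupp.addHom_ext
  intro g a
  rw [AddMonoidHom.comp_apply, chainMapOf_single, chainMapOf_single, chainMapOf_single]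
  rfl

section Action

variable (G : Type*) [Group G] (A : Type*) [AddCommGroup A]
variable (Q : Type*) [Group Q] [Fintype Q] [MulDistribMulAction Q G]

/-- The action of `q : Q` on bar chains. -/
def qMap (q : Q) (n : ℕ) : C G A n →+ C G A n :=
  chainMapOf G A (MulDistribMulAction.toMonoidHom G q) n

/-- The subgroup of `Q`-fixed elements of `G`. -/
def fixedSubgroup : Subgroup G where
  carrier := {g | ∀ q : Q, q • g = g}
  one_mem' := fun q => smul_one q
  mul_mem' := fun ha hb q => by rw [smul_mul', ha q, hb q]
  inv_mem' := fun ha q => by rw [smul_inv', ha q]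

/-- The subcomplex of `Q`-invariant bar chains. -/
def invC (n : ℕ) : AddSubgroup (C G A n) :=
  ⨅ q : Q, (qMap G A Q q n - AddMonoidHom.id (C G A n)).ker

/-- Cycles of the bar complex. -/
def cycles (n : ℕ) : AddSubgroup (C G A n) := (barDFrom G A n).ker

/-- Boundaries of the bar complex. -/
def boundaries (n : ℕ) : AddSubgroup (C G A n) := (barD G A n).range

/-- The group homology `H_n(G;A)` (with trivial action on `A`), computed from the bar complex. -/
abbrev barHomology (n : ℕ) : Type _ :=
  cycles G A n ⧸ (boundaries G A n).addSubgroupOf (cycles G A n)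

/-- `Q`-invariant cycles. -/
def invCycles (n : ℕ) : AddSubgroup (C G A n) := invC G A Q n ⊓ cycles G A n

/-- Boundaries of `Q`-invariant chains. -/
def invBoundaries (n : ℕ) : AddSubgroup (C G A n) := (invC G A Q (n + 1)).map (barD G A n)

/-- `H_n^Q(G;A)`: the homology of the subcomplex of `Q`-invariant bar chains. -/
abbrev invHomology (n : ℕ) : Type _ :=
  invCycles G A Q n ⧸ (invBoundaries G A Q n).addSubgroupOf (invCycles G A Q n)

/-- The map `i_* : H_n^Q(G;A) → H_n(G;A)` induced by the inclusion of complexes. -/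
def inclHom (n : ℕ) : invHomology G A Q n →+ barHomology G A n :=
  QuotientAddGroup.map _ _ (AddSubgroup.inclusion (show invCycles G A Q n ≤ cycles G A n from inf_le_right)) (by
    intro x hx
    rw [AddSubgroup.mem_addSubgroupOf] at hx
    rw [AddSubgroup.mem_comap, AddSubgroup.mem_addSubgroupOf, AddSubgroup.coe_inclusion]
    obtain ⟨y, -, hy⟩ := hx
    exact ⟨y, hy⟩)

/-- The subgroup `H_n(G;A)^Q` of `Q`-invariant homology classes. -/
def invariantClasses (n : ℕ) : AddSubgroup (barHomology G A n) :=
  ((⨅ q : Q, (boundaries G A n).comap (qMap G A Q q n - AddMonoidHom.id (C G A n))).addSubgroupOf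
    (cycles G A n)).map
      (QuotientAddGroup.mk' ((boundaries G A n).addSubgroupOf (cycles G A n)))

lemma chainMapOf_fixed_mem_invC (n : ℕ) (c : C (fixedSubgroup G Q) A n) :
    chainMapOf G A (fixedSubgroup G Q).subtype n c ∈ invC G A Q n := by
  have key : ∀ q : Q, (qMap G A Q q n).comp (chainMapOf G A (fixedSubgroup G Q).subtype n)
      = chainMapOf G A (fixedSubgroup G Q).subtype n := by
    intro q
    rw [qMap, chainMapOf_comp]
    congr 1
    ext x
    exact x.2 q
  rw [invC, AddSubgroup.mem_iInf]
  intro q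
  rw [AddMonoidHom.mem_ker, AddMonoidHom.sub_apply, sub_eq_zero, AddMonoidHom.id_apply,
    ← AddMonoidHom.comp_apply, key q]


lemma chainMapOf_barDFrom (n : ℕ) (c : C (fixedSubgroup G Q) A n) :
    barDFrom G A n (chainMapOf G A (fixedSubgroup G Q).subtype n c)
      = chainMapOf G A (fixedSubgroup G Q).subtype (n - 1)
          (barDFrom (fixedSubgroup G Q) A n c) := by
  match n with
  | 0 => simp [barDFrom]
  | n + 1 =>
      show (barD G A n) (chainMapOf G A (fixedSubgroup G Q).subtype (n + 1) c) = _
      rw [← AddMonoidHom.comp_apply, chainMapOf_barD]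
      rfl

/-- The map `H_n(G^Q;A) → H_n^Q(G;A)` induced by the inclusion of complexes. -/
def subIncl (n : ℕ) : barHomology (fixedSubgroup G Q) A n →+ invHomology G A Q n :=
  QuotientAddGroup.map _ _
    (((chainMapOf G A (fixedSubgroup G Q).subtype n).comp
        (cycles (fixedSubgroup G Q) A n).subtype).codRestrict (invCycles G A Q n) (by
      intro x
      rw [invCycles, AddSubgroup.mem_inf]
      refine ⟨chainMapOf_fixed_mem_invC G A Q n _, AddMonoidHom.mem_ker.mpr ?_⟩
      rw [AddMonoidHom.comp_apply, AddSubgroup.coe_subtype, chainMapOf_barDFrom,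
        AddMonoidHom.mem_ker.mp x.2, map_zero]))
    (by
      intro x hx
      rw [AddSubgroup.mem_addSubgroupOf] at hx
      obtain ⟨σ, hσ⟩ := hx
      rw [AddSubgroup.mem_comap, AddSubgroup.mem_addSubgroupOf]
      show ((chainMapOf G A (fixedSubgroup G Q).subtype n).comp
        (cycles (fixedSubgroup G Q) A n).subtype) x ∈ invBoundaries G A Q n
      rw [AddMonoidHom.comp_apply, AddSubgroup.coe_subtype, ← hσ, ← AddMonoidHom.comp_apply,
        ← chainMapOf_barD]
      exact ⟨chainMapOf G A (fixedSubgroup G Q).subtype (n + 1) σ,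
        chainMapOf_fixed_mem_invC G A Q (n + 1) σ, rfl⟩)

/-- The subgroup generated by differences `q • c - c`, i.e. the kernel of the map
to the coinvariants (the cellular chains of the quotient space `BG/Q`). -/
def W (n : ℕ) : AddSubgroup (C G A n) :=
  ⨆ q : Q, (qMap G A Q q n - AddMonoidHom.id (C G A n)).range

/-- Cycles of the coinvariants complex (the cellular chain complex of `BG/Q`),
presented as chains whose boundary lies in `W`. -/
def quotCycles (n : ℕ) : AddSubgroup (C G A n) := (W G A Q (n - 1)).comap (barDFrom G A n)

/-- Boundaries of the coinvariants complex, presented in `C_n(G;A)`. -/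
def quotBoundaries (n : ℕ) : AddSubgroup (C G A n) := W G A Q n ⊔ (barD G A n).range

/-- `H_n(BG/Q;A)`: the homology of the coinvariants complex, i.e. of the
cellular chain complex of the quotient CW-complex `BG/Q`. -/
abbrev quotHomology (n : ℕ) : Type _ :=
  quotCycles G A Q n ⧸ (quotBoundaries G A Q n).addSubgroupOf (quotCycles G A Q n)

/-- The image of the norm map `N : C_n(BG/Q) → C_n(G)^Q` sending the class of a
bar symbol to the sum over its `Q`-orbit. -/
def normImage (n : ℕ) : AddSubgroup (C G ℤ n) :=
  letI := Classical.decEq (Fin n → G)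
  AddSubgroup.closure {c | ∃ g : Fin n → G,
    c = ∑ x ∈ Finset.image (fun q : Q => fun j => q • g j) Finset.univ, Finsupp.single x (1 : ℤ)}

/-- The degree-`n` part of the cokernel `D_• = C_•(G)^Q / N(C_•(BG/Q))` of the norm map. -/
abbrev DChains (n : ℕ) : Type _ :=
  invC G ℤ Q n ⧸ (normImage G Q n).addSubgroupOf (invC G ℤ Q n)

/-- Cycles of the quotient complex `D_•`. -/
def DCycles (n : ℕ) : AddSubgroup (C G ℤ n) :=
  invC G ℤ Q n ⊓ (normImage G Q (n - 1)).comap (barDFrom G ℤ n)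

/-- Boundaries of the quotient complex `D_•`. -/
def DBoundaries (n : ℕ) : AddSubgroup (C G ℤ n) :=
  normImage G Q n ⊔ (invC G ℤ Q (n + 1)).map (barD G ℤ n)

/-- `h_n(D_•)`: the homology of the cokernel of the norm map. -/
abbrev DHomology (n : ℕ) : Type _ :=
  DCycles G Q n ⧸ (DBoundaries G Q n).addSubgroupOf (DCycles G Q n)

/-- Cellular cochains of `BG/Q` with `ℤ/2` coefficients: homomorphisms on chains. -/
abbrev Cochain (n : ℕ) : Type _ := C G ℤ n →+ ZMod 2

/-- Cochains vanishing on a subgroup of chains. -/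
def vanishing (n : ℕ) (S : AddSubgroup (C G ℤ n)) : AddSubgroup (Cochain G n) where
  carrier := {f | ∀ c ∈ S, f c = 0}
  zero_mem' := fun c _ => rfl
  add_mem' := fun hf hg c hc => by
    rw [AddMonoidHom.add_apply, hf c hc, hg c hc, add_zero]
  neg_mem' := fun hf c hc => by
    rw [AddMonoidHom.neg_apply, hf c hc, neg_zero]

/-- Precomposition with a boundary map as the coboundary operator. -/
def precomp {n m : ℕ} (d : C G ℤ m →+ C G ℤ n) : Cochain G n →+ Cochain G m :=
  AddMonoidHom.mk' (fun f => f.comp d) (fun f g => by ext c; simp)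

/-- Cocycles of the `ℤ/2`-cochain complex of `BG/Q`. -/
def quotCocycles (q : ℕ) : AddSubgroup (Cochain G q) :=
  vanishing G q (W G ℤ Q q) ⊓ (precomp G (barD G ℤ q)).ker

/-- Coboundaries of the `ℤ/2`-cochain complex of `BG/Q`. -/
def quotCoboundaries (q : ℕ) : AddSubgroup (Cochain G q) :=
  (vanishing G (q - 1) (W G ℤ Q (q - 1))).map (precomp G (barDFrom G ℤ q))

/-- `H^q(BG/Q; ℤ/2)`: the cellular cohomology of the quotient space with `ℤ/2` coefficients. -/
abbrev quotCohomology (q : ℕ) : Type _ :=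
  quotCocycles G Q q ⧸ (quotCoboundaries G Q q).addSubgroupOf (quotCocycles G Q q)

end Action

/-- The action of `ℤˣ ≅ ℤ/2` on a commutative group by inversion (negation):
the nontrivial element acts by `g ↦ g⁻¹`. -/
instance negAction (Γ : Type*) [CommGroup Γ] : MulDistribMulAction ℤˣ Γ where
  smul u g := g ^ (u : ℤ)
  one_smul g := by show g ^ ((1 : ℤˣ) : ℤ) = g; simp
  mul_smul u v g := by
    show g ^ ((↑(u * v) : ℤ)) = (g ^ (v : ℤ)) ^ (u : ℤ)
    rw [Units.val_mul, mul_comm, zpow_mul]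
  smul_mul u a b := mul_zpow a b (u : ℤ)
  smul_one u := one_zpow _

end
end IGC

/-!
Let `H ≤ G` be a finite subgroup of odd order `q` containing every square; for `G = ℤ/n` with
`4 ∤ n` take `H = 2·ℤ/n`. Replacing each entry `g` of a bar symbol by the sum over its coset
`gH` gives a map `smear` into inversion-invariant chains, because `g⁻¹H = gH`. It satisfies
`d ∘ smear = q • smear ∘ d`, and an explicit inversion-equivariant homotopy shows that
`q^(k+1) • z - q • smear z` is a boundary for every cycle `z` of degree `k`. Hence an odd
multiple of each cycle is homologous to an invariant cycle, and an odd multiple of an invariant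
boundary bounds an invariant chain. For an invariant boundary `d c`, or a cycle `z` invariant
up to a boundary, the same holds for twice it, via `c + τ c` or `z + τ z`; as the two multiples
are coprime, it holds for the cycle itself.
-/

lemma AddSubgroup.mem_of_two_nsmul_mem_of_odd_nsmul_mem {M : Type*} [AddCommGroup M]
    {K : AddSubgroup M} {m : ℕ} {x : M} (hm : Odd m) (htwo : 2 • x ∈ K)
    (hodd : m • x ∈ K) : x ∈ K := by
  obtain ⟨r, rfl⟩ := hm
  have hx : x = (2 * r + 1) • x - r • (2 • x) := by module
  rw [hx]
  exact K.sub_mem hodd (K.nsmul_mem htwo r)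

namespace IGC

open Finsupp

noncomputable section BarCons

variable {G : Type*} [Group G] {A : Type*} [AddCommGroup A] {k : ℕ}

def barCons (a : G) : C G A k →+ C G A (k + 1) :=
  mapDomain.addMonoidHom fun g => (Fin.cons a g : Fin (k + 1) → G)

@[simp]
lemma barCons_single (a : G) (g : Fin k → G) (b : A) :
    barCons a (single g b) = single (Fin.cons a g : Fin (k + 1) → G) b := by
  simp [barCons]

def barLift {B : Type*} [AddCommGroup B] (F : G → C G A k →+ B) : C G A (k + 1) →+ B :=
  liftAddHom fun g => (F (g 0)).comp (singleAddHom (Fin.tail g))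

@[simp]
lemma barLift_barCons {B : Type*} [AddCommGroup B] (F : G → C G A k →+ B) (a : G)
    (x : C G A k) : barLift F (barCons a x) = F a x := by
  induction x using Finsupp.induction_linear with
  | zero => simp
  | add x y hx hy => simp only [map_add, hx, hy]
  | single g b => simp [barLift]

@[elab_as_elim]
lemma barCons_induction {motive : C G A (k + 1) → Prop} (x : C G A (k + 1))
    (zero : motive 0) (add : ∀ x y, motive x → motive y → motive (x + y))
    (cons : ∀ a y, motive (barCons a y)) : motive x := by
  induction x using Finsupp.induction_linear with
  | zero => exact zero
  | add x y hx hy => exact add x y hx hy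
  | single g b => simpa [Fin.cons_self_tail] using cons (g 0) (single (Fin.tail g) b)

def barTail : C G A (k + 1) →+ C G A k := barLift fun _ => AddMonoidHom.id _

def barMulHead (a : G) : C G A (k + 1) →+ C G A (k + 1) := barLift fun b => barCons (a * b)

@[simp]
lemma barTail_barCons (a : G) (x : C G A k) : barTail (barCons a x) = x := by
  simp [barTail]

@[simp]
lemma barMulHead_barCons (a b : G) (x : C G A k) :
    barMulHead a (barCons b x) = barCons (a * b) x := by
  simp [barMulHead]

lemma barFace_zero {n : ℕ} (g : Fin (n + 1) → G) : barFace 0 g = Fin.tail g := by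
  funext j
  simp [barFace, Fin.tail]

lemma barFace_one_cons {n : ℕ} (a : G) (g : Fin (n + 1) → G) :
    barFace 1 (Fin.cons a g : Fin (n + 2) → G) = Fin.cons (a * g 0) (Fin.tail g) := by
  funext j
  refine Fin.cases ?_ (fun j => ?_) j <;> simp [barFace, Fin.tail]

lemma barFace_succ_succ_cons {n : ℕ} (a : G) (g : Fin (n + 1) → G) (i : Fin (n + 1)) :
    barFace i.succ.succ (Fin.cons a g : Fin (n + 2) → G) = Fin.cons a (barFace i.succ g) := by
  funext j
  refine Fin.cases ?_ (fun j => ?_) j <;> simp [barFace]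

-- Face 0 drops `a`, face 1 multiplies it into the next entry, and the other faces are those
-- of `x` behind `a`, except face 0 of `x`, which the last term puts back.
lemma barD_barCons (a : G) (x : C G A (k + 1)) :
    barD G A (k + 1) (barCons a x) =
      x - barMulHead a x - barCons a (barD G A k x) + barCons a (barTail x) := by
  induction x using Finsupp.induction_linear with
  | zero => simp
  | add x y hx hy => simp only [map_add, hx, hy]; abel
  | single g b =>
    obtain ⟨c, t, rfl⟩ : ∃ c t, g = (Fin.cons c t : Fin (k + 1) → G) :=
      ⟨g 0, Fin.tail g, (Fin.cons_self_tail g).symm⟩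
    rw [← barCons_single, barTail_barCons, barMulHead_barCons]
    simp only [barCons_single, barD_single, Fin.sum_univ_succ (n := k + 2),
      Fin.sum_univ_succ (n := k + 1), Fin.succ_zero_eq_one, barFace_zero, barFace_one_cons,
      barFace_succ_succ_cons, map_add, map_sum, Fin.tail_cons, Fin.cons_zero, Fin.val_succ,
      pow_succ, Fin.val_zero, pow_zero]
    simp only [mul_neg_one, neg_smul, one_smul, single_neg, Finset.sum_neg_distrib]
    abel

lemma barD_zero : barD G A 0 = 0 := by
  refine Finsupp.addHom_ext fun g b => ?_
  have h : barFace 1 g = barFace 0 g := funext fun j => j.elim0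
  simp [barD_single, Fin.sum_univ_two, h]

end BarCons

section Action

variable {G : Type*} [Group G] {A : Type*} [AddCommGroup A] {k n : ℕ}
variable {Q : Type*} [Group Q] [MulDistribMulAction Q G]

lemma qMap_single (q : Q) (g : Fin k → G) (b : A) :
    qMap G A Q q k (single g b) = single (fun j => q • g j) b :=
  chainMapOf_single G A _ k g b

lemma qMap_barCons (q : Q) (a : G) (x : C G A k) :
    qMap G A Q q (k + 1) (barCons a x) = barCons (q • a) (qMap G A Q q k x) := by
  induction x using Finsupp.induction_linear with
  | zero => simp
  | add x y hx hy => simp only [map_add, hx, hy]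
  | single g b =>
    rw [barCons_single, qMap_single, qMap_single, barCons_single]
    exact congrArg (single · b) (Fin.comp_cons (q • ·) a g)

lemma qMap_mul (q q' : Q) (x : C G A k) :
    qMap G A Q q k (qMap G A Q q' k x) = qMap G A Q (q * q') k x := by
  induction x using Finsupp.induction_linear with
  | zero => simp
  | add x y hx hy => simp only [map_add, hx, hy]
  | single g b => simp [qMap_single, mul_smul]

lemma qMap_one (x : C G A k) : qMap G A Q 1 k x = x := by
  induction x using Finsupp.induction_linear with
  | zero => simp
  | add x y hx hy => simp only [map_add, hx, hy]
  | single g b => simp [qMap_single]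

lemma barD_qMap (q : Q) (x : C G A (k + 1)) :
    barD G A k (qMap G A Q q (k + 1) x) = qMap G A Q q k (barD G A k x) :=
  DFunLike.congr_fun (chainMapOf_barD G A _ k) x

lemma qMap_zero (q : Q) (x : C G A 0) : qMap G A Q q 0 x = x := by
  induction x using Finsupp.induction_linear with
  | zero => simp
  | add x y hx hy => simp only [map_add, hx, hy]
  | single g b => rw [qMap_single, Subsingleton.elim (fun j => q • g j) g]

lemma mem_cycles_succ_iff {z : C G A (k + 1)} : z ∈ cycles G A (k + 1) ↔ barD G A k z = 0 :=
  Iff.rfl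

lemma qMap_mem_cycles (q : Q) {z : C G A n} (hz : z ∈ cycles G A n) :
    qMap G A Q q n z ∈ cycles G A n := by
  cases n with
  | zero => exact hz
  | succ k => rw [mem_cycles_succ_iff] at hz ⊢; rw [barD_qMap, hz, map_zero]

lemma mem_invC_iff {x : C G A n} : x ∈ invC G A Q n ↔ ∀ q, qMap G A Q q n x = x := by
  simp [invC, AddSubgroup.mem_iInf, sub_eq_zero]

lemma inclHom_injective_of
    (h : ∀ z ∈ invCycles G A Q n, z ∈ boundaries G A n → z ∈ invBoundaries G A Q n) :
    Function.Injective (inclHom G A Q n) := by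
  refine (injective_iff_map_eq_zero _).mpr fun a ha => ?_
  induction a using QuotientAddGroup.induction_on with | H z => ?_
  rw [inclHom, QuotientAddGroup.map_mk, QuotientAddGroup.eq_zero_iff,
    AddSubgroup.mem_addSubgroupOf, AddSubgroup.coe_inclusion] at ha
  rw [QuotientAddGroup.eq_zero_iff, AddSubgroup.mem_addSubgroupOf]
  exact h z z.2 ha

lemma range_inclHom_eq_of
    (h : ∀ z ∈ cycles G A n, (∀ q, qMap G A Q q n z - z ∈ boundaries G A n) →
      z ∈ invCycles G A Q n ⊔ boundaries G A n) :
    (inclHom G A Q n).range = invariantClasses G A Q n := by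
  ext c
  constructor
  · rintro ⟨a, rfl⟩
    induction a using QuotientAddGroup.induction_on with | H z => ?_
    refine ⟨AddSubgroup.inclusion (show invCycles G A Q n ≤ cycles G A n from inf_le_right) z,
      ?_, rfl⟩
    rw [SetLike.mem_coe, AddSubgroup.mem_addSubgroupOf, AddSubgroup.mem_iInf]
    intro q
    rw [AddSubgroup.mem_comap, AddMonoidHom.sub_apply, AddMonoidHom.id_apply,
      AddSubgroup.coe_inclusion, mem_invC_iff.mp (AddSubgroup.mem_inf.mp z.2).1 q, sub_self]
    exact zero_mem _
  · rintro ⟨y, hy, rfl⟩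
    rw [SetLike.mem_coe, AddSubgroup.mem_addSubgroupOf, AddSubgroup.mem_iInf] at hy
    obtain ⟨z, hz, b, hb, hzb⟩ := AddSubgroup.mem_sup.mp (h y y.2 fun q => by simpa using hy q)
    refine ⟨QuotientAddGroup.mk ⟨z, hz⟩, ?_⟩
    rw [inclHom, QuotientAddGroup.map_mk, QuotientAddGroup.mk'_apply, QuotientAddGroup.eq,
      AddSubgroup.mem_addSubgroupOf, AddSubgroup.coe_add, AddSubgroup.coe_neg,
      AddSubgroup.coe_inclusion, ← hzb, neg_add_cancel_left]
    exact hb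

end Action

noncomputable section Smear

variable {G : Type*} [CommGroup G] {A : Type*} [AddCommGroup A] {k n : ℕ}
variable (H : Subgroup G) [Fintype H]

def barConsCoset (a : G) : C G A k →+ C G A (k + 1) := ∑ h : H, barCons (a * h)

lemma barConsCoset_apply (a : G) (x : C G A k) :
    barConsCoset H a x = ∑ h : H, barCons (a * h) x :=
  AddMonoidHom.finsetSum_apply _ _ _

lemma barConsCoset_mul_of_mem (a : G) {c : G} (hc : c ∈ H) :
    barConsCoset (A := A) (k := k) H (a * c) = barConsCoset H a :=
  Fintype.sum_equiv (Equiv.mulLeft ⟨c, hc⟩) _ _ fun h => by simp [mul_assoc]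

lemma barTail_barConsCoset (a : G) (x : C G A k) :
    barTail (barConsCoset H a x) = Fintype.card H • x := by
  simp [barConsCoset_apply]

lemma barMulHead_barConsCoset (a b : G) (x : C G A k) :
    barMulHead a (barConsCoset H b x) = barConsCoset H (a * b) x := by
  simp [barConsCoset_apply, mul_assoc]

lemma sum_barMulHead_barConsCoset (a b : G) (x : C G A k) :
    ∑ h : H, barMulHead (a * h) (barConsCoset H b x) =
      Fintype.card H • barConsCoset H (a * b) x := by
  simp only [barMulHead_barConsCoset, mul_right_comm a _ b,
    barConsCoset_mul_of_mem _ _ (SetLike.coe_mem _)]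
  simp

lemma sum_barMulHead_barCons (a : G) (x : C G A k) :
    ∑ h : H, barMulHead (h : G) (barCons a x) = barConsCoset H a x := by
  simp [barConsCoset_apply, mul_comm]

lemma barD_barConsCoset (a : G) (x : C G A (k + 1)) :
    barD G A (k + 1) (barConsCoset H a x) = Fintype.card H • x -
      ∑ h : H, barMulHead (a * h) x - barConsCoset H a (barD G A k x) +
        barConsCoset H a (barTail x) := by
  simp only [barConsCoset_apply, map_sum, barD_barCons, Finset.sum_add_distrib,
    Finset.sum_sub_distrib, Finset.sum_const, Finset.card_univ]

def smear : (k : ℕ) → C G A k →+ C G A k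
  | 0 => AddMonoidHom.id _
  | k + 1 => barLift fun a => (barConsCoset H a).comp (smear k)

@[simp]
lemma smear_zero (x : C G A 0) : smear H 0 x = x := rfl

@[simp]
lemma smear_barCons (a : G) (x : C G A k) :
    smear H (k + 1) (barCons a x) = barConsCoset H a (smear H k x) := by
  simp [smear]

def smearHomotopy : (k : ℕ) → C G A k →+ C G A (k + 1)
  | 0 => barConsCoset H 1
  | k + 1 => barLift fun a => Fintype.card H ^ (k + 1) • (barConsCoset H 1).comp (barCons a) -
      (barConsCoset H a).comp (smearHomotopy k)

@[simp]
lemma smearHomotopy_zero (x : C G A 0) : smearHomotopy H 0 x = barConsCoset H 1 x := rfl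

@[simp]
lemma smearHomotopy_barCons (a : G) (x : C G A k) :
    smearHomotopy H (k + 1) (barCons a x) =
      Fintype.card H ^ (k + 1) • barConsCoset H 1 (barCons a x) -
        barConsCoset H a (smearHomotopy H k x) := by
  simp [smearHomotopy]

lemma barTail_smear (x : C G A (k + 1)) :
    barTail (smear H (k + 1) x) = Fintype.card H • smear H k (barTail x) := by
  induction x using barCons_induction with
  | zero => simp
  | add x y hx hy => simp only [map_add, hx, hy, smul_add]
  | cons a y => simp [barTail_barConsCoset]

lemma sum_barMulHead_smear (a : G) (x : C G A (k + 1)) :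
    ∑ h : H, barMulHead (a * h) (smear H (k + 1) x) =
      Fintype.card H • smear H (k + 1) (barMulHead a x) := by
  induction x using barCons_induction with
  | zero => simp
  | add x y hx hy => simp only [map_add, Finset.sum_add_distrib, hx, hy, smul_add]
  | cons b y => simp [sum_barMulHead_barConsCoset]

lemma barD_smear (x : C G A (k + 1)) :
    barD G A k (smear H (k + 1) x) = Fintype.card H • smear H k (barD G A k x) := by
  induction k with
  | zero => simp [barD_zero]
  | succ k ih =>
    induction x using barCons_induction with
    | zero => simp
    | add x y hx hy => simp only [map_add, hx, hy, smul_add]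
    | cons a y =>
      rw [smear_barCons, barD_barConsCoset, barD_barCons, sum_barMulHead_smear, ih, barTail_smear]
      simp only [map_add, map_sub, map_nsmul, smear_barCons, smul_add, smul_sub]

lemma barTail_smearHomotopy (x : C G A (k + 1)) :
    barTail (smearHomotopy H (k + 1) x) =
      Fintype.card H ^ (k + 2) • x - Fintype.card H • smearHomotopy H k (barTail x) := by
  induction x using barCons_induction with
  | zero => simp
  | add x y hx hy => simp only [map_add]; linear_combination (norm := module) hx + hy
  | cons a y =>
    simp only [smearHomotopy_barCons, map_sub, map_nsmul, barTail_barConsCoset, barTail_barCons]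
    module

lemma sum_barMulHead_smearHomotopy (a : G) (x : C G A (k + 1)) :
    ∑ h : H, barMulHead (a * h) (smearHomotopy H (k + 1) x) =
      Fintype.card H • smearHomotopy H (k + 1) (barMulHead a x) +
        Fintype.card H ^ (k + 2) • (barConsCoset H a x - barConsCoset H 1 (barMulHead a x)) := by
  induction x using barCons_induction with
  | zero => simp
  | add x y hx hy => simp only [map_add, Finset.sum_add_distrib, hx, hy]; module
  | cons b y =>
    simp only [smearHomotopy_barCons, map_sub, map_nsmul, Finset.sum_sub_distrib,
      ← Finset.smul_sum, sum_barMulHead_barConsCoset, barMulHead_barCons, mul_one]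
    module

lemma barD_smearHomotopy (x : C G A (k + 1)) :
    barD G A (k + 1) (smearHomotopy H (k + 1) x) +
        Fintype.card H • smearHomotopy H k (barD G A k x) =
      Fintype.card H ^ (k + 2) • x - Fintype.card H • smear H (k + 1) x := by
  induction k with
  | zero =>
    induction x using barCons_induction with
    | zero => simp
    | add x y hx hy => simp only [map_add]; linear_combination (norm := module) hx + hy
    | cons a y =>
      simp only [smearHomotopy_barCons, smearHomotopy_zero, map_sub, map_nsmul, barD_barConsCoset,
        sum_barMulHead_barCons, sum_barMulHead_barConsCoset, barTail_barCons, barTail_barConsCoset,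
        barD_zero, AddMonoidHom.zero_apply, map_zero, smear_barCons, smear_zero, one_mul, mul_one]
      module
  | succ k ih =>
    induction x using barCons_induction with
    | zero => simp
    | add x y hx hy => simp only [map_add]; linear_combination (norm := module) hx + hy
    | cons a y =>
      have ih' := eq_sub_of_add_eq (ih y)
      simp only [smearHomotopy_barCons, map_sub, map_nsmul, map_add, barD_barConsCoset,
        sum_barMulHead_barCons, sum_barMulHead_smearHomotopy, barTail_barCons,
        barTail_smearHomotopy, barD_barCons, ih', smear_barCons, one_mul]
      module

lemma barD_smearHomotopy_of_mem_cycles {z : C G A n} (hz : z ∈ cycles G A n) :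
    barD G A n (smearHomotopy H n z) =
      Fintype.card H ^ (n + 1) • z - Fintype.card H • smear H n z := by
  cases n with
  | zero => simp [barD_zero]
  | succ k =>
    rw [mem_cycles_succ_iff] at hz
    simpa [hz] using barD_smearHomotopy H z

lemma smear_mem_cycles {z : C G A n} (hz : z ∈ cycles G A n) : smear H n z ∈ cycles G A n := by
  cases n with
  | zero => exact hz
  | succ k => rw [mem_cycles_succ_iff] at hz ⊢; rw [barD_smear, hz, map_zero, smul_zero]

end Smear

section Inversion

variable {G : Type*} [CommGroup G] {A : Type*} [AddCommGroup A] {k n : ℕ}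
variable (H : Subgroup G) [Fintype H]

lemma units_neg_one_smul (g : G) : (-1 : ℤˣ) • g = g⁻¹ := by
  show g ^ ((-1 : ℤˣ) : ℤ) = g⁻¹
  simp

lemma qMap_neg_one_qMap_neg_one (x : C G A k) :
    qMap G A ℤˣ (-1) k (qMap G A ℤˣ (-1) k x) = x := by
  rw [qMap_mul, neg_one_mul, neg_neg, qMap_one]

lemma mem_invC_iff_qMap_neg_one {x : C G A k} :
    x ∈ invC G A ℤˣ k ↔ qMap G A ℤˣ (-1) k x = x := by
  refine mem_invC_iff.trans ⟨fun h => h _, fun h q => ?_⟩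
  rcases Int.units_eq_one_or q with rfl | rfl
  exacts [qMap_one x, h]

lemma qMap_neg_one_barConsCoset (a : G) (x : C G A k) :
    qMap G A ℤˣ (-1) (k + 1) (barConsCoset H a x) =
      barConsCoset H a⁻¹ (qMap G A ℤˣ (-1) k x) := by
  simp only [barConsCoset_apply, map_sum, qMap_barCons, units_neg_one_smul, mul_inv]
  exact Fintype.sum_equiv (Equiv.inv H) _ _ fun h => rfl

variable {H} in
lemma barConsCoset_inv (hsq : ∀ g : G, g * g ∈ H) (a : G) :
    barConsCoset (A := A) (k := k) H a⁻¹ = barConsCoset H a := by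
  rw [← barConsCoset_mul_of_mem H a (hsq a⁻¹)]
  group

variable {H} in
lemma qMap_neg_one_smear (hsq : ∀ g : G, g * g ∈ H) (x : C G A k) :
    qMap G A ℤˣ (-1) k (smear H k x) = smear H k x := by
  induction k with
  | zero => exact qMap_zero _ _
  | succ k ih =>
    induction x using barCons_induction with
    | zero => simp
    | add x y hx hy => simp only [map_add, hx, hy]
    | cons a y => rw [smear_barCons, qMap_neg_one_barConsCoset, ih, barConsCoset_inv hsq]

lemma qMap_neg_one_smearHomotopy (x : C G A k) :
    qMap G A ℤˣ (-1) (k + 1) (smearHomotopy H k x) =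
      smearHomotopy H k (qMap G A ℤˣ (-1) k x) := by
  induction k with
  | zero => simp [qMap_neg_one_barConsCoset]
  | succ k ih =>
    induction x using barCons_induction with
    | zero => simp
    | add x y hx hy => simp only [map_add, hx, hy]
    | cons a y =>
      simp only [smearHomotopy_barCons, map_sub, map_nsmul, qMap_barCons,
        qMap_neg_one_barConsCoset, ih, units_neg_one_smul, inv_one]

variable {H}

theorem inclHom_injective_of_odd_card (hodd : Odd (Fintype.card H))
    (hsq : ∀ g : G, g * g ∈ H) (n : ℕ) : Function.Injective (inclHom G A ℤˣ n) := by
  refine inclHom_injective_of fun z hz ⟨c, hc⟩ => ?_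
  obtain ⟨hzi, hzc⟩ := AddSubgroup.mem_inf.mp hz
  subst hc
  refine AddSubgroup.mem_of_two_nsmul_mem_of_odd_nsmul_mem (hodd.pow (n := n + 1)) ?_ ?_
  · refine AddSubgroup.mem_map.mpr ⟨c + qMap G A ℤˣ (-1) (n + 1) c, ?_, ?_⟩
    · rw [mem_invC_iff_qMap_neg_one, map_add, qMap_neg_one_qMap_neg_one]
      exact add_comm _ _
    · rw [map_add, barD_qMap, mem_invC_iff_qMap_neg_one.mp hzi, two_nsmul]
  · refine AddSubgroup.mem_map.mpr
      ⟨smearHomotopy H n (barD G A n c) + smear H (n + 1) c, ?_, ?_⟩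
    · rw [mem_invC_iff_qMap_neg_one, map_add, qMap_neg_one_smearHomotopy,
        mem_invC_iff_qMap_neg_one.mp hzi, qMap_neg_one_smear hsq]
    · rw [map_add, barD_smearHomotopy_of_mem_cycles H hzc, barD_smear, sub_add_cancel]

theorem range_inclHom_eq_of_odd_card (hodd : Odd (Fintype.card H))
    (hsq : ∀ g : G, g * g ∈ H) (n : ℕ) :
    (inclHom G A ℤˣ n).range = invariantClasses G A ℤˣ n := by
  refine range_inclHom_eq_of fun z hz hτ => ?_
  refine AddSubgroup.mem_of_two_nsmul_mem_of_odd_nsmul_mem (hodd.pow (n := n + 1)) ?_ ?_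
  · have hsym : z + qMap G A ℤˣ (-1) n z ∈ invCycles G A ℤˣ n := by
      refine AddSubgroup.mem_inf.mpr ⟨?_, add_mem hz (qMap_mem_cycles _ hz)⟩
      rw [mem_invC_iff_qMap_neg_one, map_add, qMap_neg_one_qMap_neg_one]
      exact add_comm _ _
    rw [show 2 • z = (z + qMap G A ℤˣ (-1) n z) - (qMap G A ℤˣ (-1) n z - z) by abel]
    exact sub_mem (AddSubgroup.mem_sup_left hsym) (AddSubgroup.mem_sup_right (hτ (-1)))
  · have hsmear : smear H n z ∈ invCycles G A ℤˣ n :=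
      AddSubgroup.mem_inf.mpr
        ⟨mem_invC_iff_qMap_neg_one.mpr (qMap_neg_one_smear hsq z), smear_mem_cycles H hz⟩
    rw [← sub_add_cancel (_ • z) (Fintype.card H • smear H n z),
      ← barD_smearHomotopy_of_mem_cycles H hz]
    exact add_mem (AddSubgroup.mem_sup_right ⟨_, rfl⟩)
      (AddSubgroup.mem_sup_left (nsmul_mem hsmear _))

end Inversion

end IGC

lemma mul_self_mem_zpowers_ofAdd_two (n : ℕ) (g : Multiplicative (ZMod n)) :
    g * g ∈ Subgroup.zpowers (Multiplicative.ofAdd (2 : ZMod n)) := by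
  refine Subgroup.mem_zpowers_iff.mpr ⟨(g.toAdd.cast : ℤ), ?_⟩
  rw [← ofAdd_zsmul, zsmul_eq_mul, ZMod.intCast_zmod_cast, mul_two]
  rfl

lemma odd_card_zpowers_ofAdd_two {n : ℕ} (hn : n ≠ 0) (h4 : ¬ 4 ∣ n) :
    Odd (Nat.card (Subgroup.zpowers (Multiplicative.ofAdd (2 : ZMod n)))) := by
  rw [Nat.card_zpowers, orderOf_ofAdd_eq_addOrderOf, ← Nat.cast_ofNat, ZMod.addOrderOf_coe 2 hn]
  rcases Nat.even_or_odd n with ⟨m, rfl⟩ | hodd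
  · rw [Nat.gcd_eq_right ⟨m, (two_mul m).symm⟩, show (m + m) / 2 = m by omega, Nat.odd_iff]
    omega
  · rw [Nat.coprime_two_right.mpr hodd |>.gcd_eq_one, Nat.div_one]
    exact hodd

/-- if `n` is a positive integer with `n ≢ 0 mod 4`, then the natural map
`i_* : H_*^{ℤ/2}(ℤ/n;ℤ) → H_*(ℤ/n;ℤ)^{ℤ/2}` is an isomorphism, where `ℤ/2 = ℤˣ` acts by
negation. -/
theorem stmt14 (n : ℕ) (hpos : 0 < n) (h4 : ¬ (4 ∣ n)) (l : ℕ) :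
    Function.Injective (IGC.inclHom (Multiplicative (ZMod n)) ℤ ℤˣ l) ∧
      (IGC.inclHom (Multiplicative (ZMod n)) ℤ ℤˣ l).range =
        IGC.invariantClasses (Multiplicative (ZMod n)) ℤ ℤˣ l := by
  have : NeZero n := ⟨hpos.ne'⟩
  have hodd := odd_card_zpowers_ofAdd_two hpos.ne' h4
  rw [← Fintype.card_eq_nat_card] at hodd
  exact ⟨IGC.inclHom_injective_of_odd_card hodd (mul_self_mem_zpowers_ofAdd_two n) l,
    IGC.range_inclHom_eq_of_odd_card hodd (mul_self_mem_zpowers_ofAdd_two n) l⟩
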